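/- Let X₁,...,X_N be i.i.d. with positive continuous density near v_α, and let v̂ be any estimator with |v̂ − v_α| ≤ C N^{−1/2}(log N)^{1/2} almost surely for large N. Then |(1/N)Σ_{i=1}^N (X_i − v̂)⁺ − (1/N)Σ_{i=1}^N (X_i − v_α)⁺ + (v̂ − v_α)(1 − F̂_N(v_α))| = O(N^{−1} log N) almost surely, where F̂_N is the empirical c.d.f. -/

import Mathlib

/-!
For `|b - a| ≤ δ` the summand `(x - b)⁺ - (x - a)⁺ + (b - a) 1{x > a}` equals `(x - b)⁺` when
`x ≤ a` and `(b - x)⁺` when `x > a`: it vanishes unless `x` lies between `a` and `b`, and is at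
most `δ` in absolute value. So the whole expression is at most `δ / N` times the number of sample
points within `δ` of `v_α`. Take `δ_N = c √(log N / N)`. Since the density is bounded near `v_α`,
each point lands in that window with probability `O(δ_N)`, and a Chernoff bound for the binomial
count shows that at least `K √(N log N)` points land there with probability at most `N⁻²`.
By Borel–Cantelli this almost surely happens only finitely often, which leaves the bound
`δ_N K √(N log N) / N = c K log N / N`.
-/

open MeasureTheory ProbabilityTheory Filter Set

/-- Empirical c.d.f. of the first `N` observations. -/
noncomputable def empCDF {Ω : Type*} (X : ℕ → Ω → ℝ) (N : ℕ) (ω : Ω) (t : ℝ) : ℝ :=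
  (N : ℝ)⁻¹ * ∑ i ∈ Finset.range N, if X i ω ≤ t then (1 : ℝ) else 0

/-- Sample `α`-quantile (the `⌈αN⌉`-th order statistic) of the first `N` observations. -/
noncomputable def sampleQuantile {Ω : Type*} (X : ℕ → Ω → ℝ) (N : ℕ) (α : ℝ) (ω : Ω) : ℝ :=
  sInf {t : ℝ | α ≤ empCDF X N ω t}

open scoped Topology

theorem abs_max_sub_max_add_le {a b x δ : ℝ} (h : |b - a| ≤ δ) :
    |max (x - b) 0 - max (x - a) 0 + (b - a) * (1 - if x ≤ a then 1 else 0)| ≤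
      δ * (Metric.closedBall a δ).indicator 1 x := by
  rw [abs_le] at h
  rw [Real.closedBall_eq_Icc]
  by_cases hx : x ∈ Icc (a - δ) (a + δ)
  · rw [indicator_of_mem hx, Pi.one_apply, mul_one, abs_le]
    split_ifs <;> constructor <;> simp only [max_def] <;> split_ifs <;> linarith
  · rw [indicator_of_notMem hx, mul_zero, abs_nonpos_iff]
    rw [mem_Icc, not_and_or, not_le, not_le] at hx
    rcases hx with hx | hx
    · rw [if_pos (by linarith), max_eq_right (by linarith), max_eq_right (by linarith)]
      ring
    · rw [if_neg (by linarith), max_eq_left (by linarith), max_eq_left (by linarith)]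
      ring

theorem abs_truncatedAverage_sub_le {Ω : Type*} (X : ℕ → Ω → ℝ) (ω : Ω) {N : ℕ} (hN : 0 < N)
    {a b δ : ℝ} (h : |b - a| ≤ δ) :
    |(N : ℝ)⁻¹ * ∑ i ∈ Finset.range N, max (X i ω - b) 0
        - (N : ℝ)⁻¹ * ∑ i ∈ Finset.range N, max (X i ω - a) 0
        + (b - a) * (1 - empCDF X N ω a)| ≤
      (N : ℝ)⁻¹ * (δ * ∑ i ∈ Finset.range N, (Metric.closedBall a δ).indicator 1 (X i ω)) := by
  have hN' : (N : ℝ) ≠ 0 := by positivity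
  have hsplit : (N : ℝ)⁻¹ * ∑ i ∈ Finset.range N, max (X i ω - b) 0
        - (N : ℝ)⁻¹ * ∑ i ∈ Finset.range N, max (X i ω - a) 0
        + (b - a) * (1 - empCDF X N ω a) =
      (N : ℝ)⁻¹ * ∑ i ∈ Finset.range N, (max (X i ω - b) 0 - max (X i ω - a) 0
        + (b - a) * (1 - if X i ω ≤ a then 1 else 0)) := by
    simp only [empCDF, Finset.sum_add_distrib, Finset.sum_sub_distrib, ← Finset.mul_sum,
      Finset.sum_const, Finset.card_range, nsmul_eq_mul, mul_one]
    field_simp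
  rw [hsplit, abs_mul, abs_inv, Nat.abs_cast, Finset.mul_sum]
  gcongr
  exact (Finset.abs_sum_le_sum_abs _ _).trans
    (Finset.sum_le_sum fun i _ => abs_max_sub_max_add_le h)

theorem mgf_indicator_one_le {Ω : Type*} {mΩ : MeasurableSpace Ω} {μ : Measure Ω}
    [IsProbabilityMeasure μ] {t : Set Ω} (ht : MeasurableSet t) :
    mgf (t.indicator 1) μ 1 ≤ Real.exp ((Real.exp 1 - 1) * μ.real t) := by
  have hexp : (fun ω => Real.exp (1 * t.indicator 1 ω)) =
      fun ω => 1 + (Real.exp 1 - 1) * t.indicator 1 ω := by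
    funext ω
    by_cases hω : ω ∈ t <;> simp [hω]
  rw [mgf, hexp, integral_add (integrable_const 1)
      (((integrable_const 1).indicator ht).const_mul _), integral_const_mul,
    integral_indicator_one ht]
  simpa [add_comm] using Real.add_one_le_exp ((Real.exp 1 - 1) * μ.real t)

theorem measureReal_sum_indicator_ge_le {Ω : Type*} {mΩ : MeasurableSpace Ω} {μ : Measure Ω}
    [IsProbabilityMeasure μ] {X : ℕ → Ω → ℝ} (hmeas : ∀ i, Measurable (X i))
    (hindep : iIndepFun X μ) {s : Set ℝ} (hs : MeasurableSet s) {p : ℝ}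
    (hp : ∀ i, μ.real (X i ⁻¹' s) ≤ p) (N : ℕ) (a : ℝ) :
    μ.real {ω | a ≤ ∑ i ∈ Finset.range N, s.indicator 1 (X i ω)} ≤
      Real.exp (N * (Real.exp 1 - 1) * p - a) := by
  set Y : ℕ → Ω → ℝ := fun i => s.indicator 1 ∘ X i
  have hY : ∀ i, Y i = (X i ⁻¹' s).indicator 1 := fun i =>
    funext fun ω => (indicator_comp_right (g := 1) (X i)).symm
  have hYmeas : ∀ i, Measurable (Y i) := fun i => (measurable_one.indicator hs).comp (hmeas i)
  have hYindep : iIndepFun Y μ := hindep.comp _ fun _ => measurable_one.indicator hs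
  have hint : Integrable (fun ω => Real.exp (1 * (∑ i ∈ Finset.range N, Y i) ω)) μ :=
    hYindep.integrable_exp_mul_sum hYmeas fun i _ => integrable_exp_mul_of_le 1 1 zero_le_one
      (hYmeas i).aemeasurable (ae_of_all _ fun ω => indicator_le_self' (by simp) _)
  have hChernoff := measure_ge_le_exp_mul_mgf a zero_le_one hint
  simp only [Finset.sum_apply, Y, Function.comp_apply] at hChernoff
  refine hChernoff.trans ?_
  calc Real.exp (-1 * a) * mgf (∑ i ∈ Finset.range N, Y i) μ 1
      = Real.exp (-a) * ∏ i ∈ Finset.range N, mgf (Y i) μ 1 := by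
        rw [hYindep.mgf_sum hYmeas, neg_one_mul]
    _ ≤ Real.exp (-a) * ∏ _i ∈ Finset.range N, Real.exp ((Real.exp 1 - 1) * p) := by
        gcongr with i
        · exact fun _ _ => mgf_nonneg
        · rw [hY]
          refine (mgf_indicator_one_le ((hmeas i) hs)).trans ?_
          gcongr
          · linarith [Real.add_one_le_exp 1]
          · exact hp i
    _ = Real.exp (N * (Real.exp 1 - 1) * p - a) := by
        rw [Finset.prod_const, Finset.card_range, ← Real.exp_nat_mul, ← Real.exp_add]
        congr 1
        ring

theorem ae_eventually_notMem_of_summable {α : Type*} {mα : MeasurableSpace α} {μ : Measure α}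
    [IsFiniteMeasure μ] {s : ℕ → Set α} {g : ℕ → ℝ} (hg : Summable g)
    (h : ∀ᶠ n in atTop, μ.real (s n) ≤ g n) : ∀ᵐ x ∂μ, ∀ᶠ n in atTop, x ∉ s n := by
  have hsum : Summable fun n => μ.real (s n) :=
    hg.of_norm_bounded_eventually_nat (by simpa [abs_of_nonneg] using h)
  apply ae_eventually_notMem
  simp_rw [← ofReal_measureReal (measure_ne_top μ _),
    ← ENNReal.ofReal_tsum_of_nonneg (fun _ => measureReal_nonneg) hsum]
  exact ENNReal.ofReal_ne_top

theorem withDensity_ofReal_le {α : Type*} {mα : MeasurableSpace α} {ν : Measure α}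
    {f : α → ℝ} {s : Set α} (hs : MeasurableSet s) {M : ℝ} (hf : ∀ t ∈ s, f t ≤ M) :
    ν.withDensity (fun t => ENNReal.ofReal (f t)) s ≤ ENNReal.ofReal M * ν s := by
  rw [withDensity_apply _ hs, ← setLIntegral_const]
  exact setLIntegral_mono measurable_const fun t ht => ENNReal.ofReal_le_ofReal (hf t ht)

theorem exists_measureReal_preimage_closedBall_le {Ω : Type*} {mΩ : MeasurableSpace Ω}
    {μ : Measure Ω} {X : ℕ → Ω → ℝ} (hmeas : ∀ i, Measurable (X i))
    (hident : ∀ i, μ.map (X i) = μ.map (X 0)) {f : ℝ → ℝ}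
    (hdens : μ.map (X 0) = volume.withDensity (fun t => ENNReal.ofReal (f t)))
    {v ε : ℝ} (hε : 0 < ε) (hcont : ContinuousOn f (Metric.ball v ε)) :
    ∃ L, ∀ δ ∈ Icc 0 (ε / 2), ∀ i, μ.real (X i ⁻¹' Metric.closedBall v δ) ≤ L * δ := by
  obtain ⟨M, hM⟩ := (isCompact_closedBall v (ε / 2)).exists_bound_of_continuousOn
    (hcont.mono (Metric.closedBall_subset_ball (half_lt_self hε)))
  have hM0 : 0 ≤ M := (norm_nonneg _).trans (hM v (Metric.mem_closedBall_self (by positivity)))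
  refine ⟨2 * M, fun δ hδ i => ?_⟩
  rw [← map_measureReal_apply (hmeas i) measurableSet_closedBall, hident, hdens, measureReal_def]
  refine ENNReal.toReal_le_of_le_ofReal (by nlinarith [hδ.1]) ?_
  calc _ ≤ ENNReal.ofReal M * volume (Metric.closedBall v δ) :=
        withDensity_ofReal_le measurableSet_closedBall fun t ht =>
          (le_abs_self _).trans (hM t (Metric.closedBall_subset_closedBall hδ.2 ht))
    _ = ENNReal.ofReal (2 * M * δ) := by
        rw [Real.volume_closedBall, ← ENNReal.ofReal_mul hM0]; congr 1; ring


theorem tendsto_sqrt_log_div_atTop :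
    Tendsto (fun N : ℕ => √(Real.log N / N)) atTop (𝓝 0) := by
  refine (Real.continuous_sqrt.tendsto' 0 0 Real.sqrt_zero).comp ?_
  simpa [Function.comp_def] using (Real.tendsto_pow_log_div_mul_add_atTop 1 0 1 one_ne_zero).comp
    tendsto_natCast_atTop_atTop

theorem log_le_mul_sqrt_log_div (N : ℕ) : Real.log N ≤ N * √(Real.log N / N) := by
  rcases N.eq_zero_or_pos with rfl | hN
  · simp
  have hN' : (0 : ℝ) < N := Nat.cast_pos.mpr hN
  have hlog : 0 ≤ Real.log N := Real.log_natCast_nonneg N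
  have hle_one : √(Real.log N / N) ≤ 1 :=
    Real.sqrt_le_one.mpr ((div_le_one hN').mpr (Real.log_le_self hN'.le))
  calc Real.log N = N * √(Real.log N / N) ^ 2 := by
        rw [Real.sq_sqrt (by positivity)]; field_simp
    _ ≤ N * √(Real.log N / N) := by
        gcongr
        nlinarith [Real.sqrt_nonneg (Real.log N / N)]

theorem natCast_rpow_neg_half_mul_rpow_half (N : ℕ) (x : ℝ) :
    (N : ℝ) ^ (-(1 : ℝ)/2) * x ^ ((1 : ℝ)/2) = √(x / N) := by
  rcases N.eq_zero_or_pos with rfl | hN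
  · simp
  rw [← Real.sqrt_eq_rpow, neg_div, Real.rpow_neg (Nat.cast_nonneg N), ← Real.sqrt_eq_rpow,
    Real.sqrt_div' _ (Nat.cast_nonneg N), div_eq_inv_mul]

theorem ae_eventually_sum_indicator_closedBall_le {Ω : Type*} {mΩ : MeasurableSpace Ω}
    {μ : Measure Ω} [IsProbabilityMeasure μ] {X : ℕ → Ω → ℝ} (hmeas : ∀ i, Measurable (X i))
    (hindep : iIndepFun X μ) {v L ε : ℝ} (hε : 0 < ε)
    (hlaw : ∀ δ ∈ Icc 0 ε, ∀ i, μ.real (X i ⁻¹' Metric.closedBall v δ) ≤ L * δ)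
    {c : ℝ} (hc : 0 ≤ c) :
    ∃ K, ∀ᵐ ω ∂μ, ∀ᶠ N : ℕ in atTop,
      ∑ i ∈ Finset.range N, (Metric.closedBall v (c * √(Real.log N / N))).indicator 1 (X i ω)
        ≤ K * N * √(Real.log N / N) := by
  -- this `K` turns the Chernoff exponent into `-2 N √(log N / N) ≤ -2 log N`
  set K := (Real.exp 1 - 1) * L * c + 2
  refine ⟨K, ?_⟩
  have hsmall : ∀ᶠ N : ℕ in atTop, c * √(Real.log N / N) ≤ ε := by
    simpa using (tendsto_sqrt_log_div_atTop.const_mul c).eventually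
      (eventually_le_nhds (by simpa using hε))
  have hbad : ∀ᶠ N : ℕ in atTop, μ.real {ω | K * N * √(Real.log N / N) ≤
      ∑ i ∈ Finset.range N, (Metric.closedBall v (c * √(Real.log N / N))).indicator 1 (X i ω)}
        ≤ ((N : ℝ) ^ 2)⁻¹ := by
    filter_upwards [hsmall, eventually_gt_atTop 0] with N hN hNpos
    refine (measureReal_sum_indicator_ge_le hmeas hindep measurableSet_closedBall
      (hlaw _ ⟨by positivity, hN⟩) N _).trans ?_
    calc _ = Real.exp (-(2 * (N * √(Real.log N / N)))) := by congr 1; ring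
      _ ≤ Real.exp (-(2 * Real.log N)) := by gcongr; exact log_le_mul_sqrt_log_div N
      _ = ((N : ℝ) ^ 2)⁻¹ := by
        rw [Real.exp_neg, show 2 * Real.log N = Real.log ((N : ℝ) ^ 2) by simp [Real.log_pow],
          Real.exp_log (by positivity)]
  filter_upwards [ae_eventually_notMem_of_summable
    (Real.summable_nat_pow_inv.mpr one_lt_two) hbad] with ω hω
  filter_upwards [hω] with N hN
  exact (not_le.mp hN).le

theorem truncated_average_oscillation_general {Ω : Type*} {mΩ : MeasurableSpace Ω}
    (μ : Measure Ω) [IsProbabilityMeasure μ]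
    (X : ℕ → Ω → ℝ) (hmeas : ∀ i, Measurable (X i))
    (hindep : iIndepFun X μ)
    (hident : ∀ i, μ.map (X i) = μ.map (X 0))
    (f : ℝ → ℝ)
    (hdens : μ.map (X 0) = volume.withDensity (fun t => ENNReal.ofReal (f t)))
    (vα : ℝ)
    (hf : ∃ ε > 0, ContinuousOn f (Metric.ball vα ε) ∧ ∀ t ∈ Metric.ball vα ε, 0 < f t)
    (vhat : ℕ → Ω → ℝ) (C : ℝ)
    (hvhat : ∀ᵐ ω ∂μ, ∀ᶠ N : ℕ in atTop,
      |vhat N ω - vα| ≤ C * (N : ℝ) ^ (-(1 : ℝ)/2) * (Real.log N) ^ ((1 : ℝ)/2)) :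
    ∃ C' : ℝ, ∀ᵐ ω ∂μ, ∀ᶠ N : ℕ in atTop,
      |(N : ℝ)⁻¹ * ∑ i ∈ Finset.range N, max (X i ω - vhat N ω) 0
        - (N : ℝ)⁻¹ * ∑ i ∈ Finset.range N, max (X i ω - vα) 0
        + (vhat N ω - vα) * (1 - empCDF X N ω vα)| ≤ C' * Real.log N / N := by
  obtain ⟨ε, hε, hcont, -⟩ := hf
  obtain ⟨L, hlaw⟩ := exists_measureReal_preimage_closedBall_le hmeas hident hdens hε hcont
  obtain ⟨c, hCc, hc⟩ : ∃ c, C ≤ c ∧ 0 ≤ c := ⟨max C 0, le_max_left C 0, le_max_right C 0⟩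
  obtain ⟨K, hcount⟩ := ae_eventually_sum_indicator_closedBall_le hmeas hindep (half_pos hε) hlaw hc
  refine ⟨c * K, ?_⟩
  filter_upwards [hvhat, hcount] with ω hvhatω hcountω
  filter_upwards [hvhatω, hcountω, eventually_gt_atTop 0] with N hclose hcountN hN
  rw [mul_assoc, natCast_rpow_neg_half_mul_rpow_half] at hclose
  replace hclose := hclose.trans (mul_le_mul_of_nonneg_right hCc (Real.sqrt_nonneg _))
  calc _ ≤ (N : ℝ)⁻¹ * (c * √(Real.log N / N) * ∑ i ∈ Finset.range N,
          (Metric.closedBall vα (c * √(Real.log N / N))).indicator 1 (X i ω)) :=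
        abs_truncatedAverage_sub_le X ω hN hclose
    _ ≤ (N : ℝ)⁻¹ * (c * √(Real.log N / N) * (K * N * √(Real.log N / N))) := by gcongr
    _ = c * K * Real.log N / N := by
        have hsq : √(Real.log N / N) ^ 2 = Real.log N / N := Real.sq_sqrt (by positivity)
        field_simp
        rw [hsq]
        field_simp

/-- Oscillation bound for truncated empirical averages: if `v̂` is within
`C N^(−1/2)(log N)^(1/2)` of `v_α` almost surely eventually, then
`(1/N)Σ(X_i − v̂)⁺ − (1/N)Σ(X_i − v_α)⁺ + (v̂ − v_α)(1 − F̂_N(v_α)) = O_{a.s.}(N⁻¹ log N)`. -/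
theorem truncated_average_oscillation {Ω : Type*} {mΩ : MeasurableSpace Ω}
    (μ : Measure Ω) [IsProbabilityMeasure μ]
    (X : ℕ → Ω → ℝ) (hmeas : ∀ i, Measurable (X i))
    (hindep : iIndepFun X μ)
    (hident : ∀ i, μ.map (X i) = μ.map (X 0))
    (f : ℝ → ℝ)
    (hdens : μ.map (X 0) = volume.withDensity (fun t => ENNReal.ofReal (f t)))
    (α : ℝ) (hα : α ∈ Set.Ioo (0 : ℝ) 1)
    (vα : ℝ) (hvα : vα = sInf {t : ℝ | α ≤ ((μ.map (X 0)) (Set.Iic t)).toReal})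
    (hf : ∃ ε > 0, ContinuousOn f (Metric.ball vα ε) ∧ ∀ t ∈ Metric.ball vα ε, 0 < f t)
    (vhat : ℕ → Ω → ℝ) (C : ℝ)
    (hvhat : ∀ᵐ ω ∂μ, ∀ᶠ N : ℕ in atTop,
      |vhat N ω - vα| ≤ C * (N : ℝ) ^ (-(1 : ℝ)/2) * (Real.log N) ^ ((1 : ℝ)/2)) :
    ∃ C' : ℝ, ∀ᵐ ω ∂μ, ∀ᶠ N : ℕ in atTop,
      |(N : ℝ)⁻¹ * ∑ i ∈ Finset.range N, max (X i ω - vhat N ω) 0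
        - (N : ℝ)⁻¹ * ∑ i ∈ Finset.range N, max (X i ω - vα) 0
        + (vhat N ω - vα) * (1 - empCDF X N ω vα)| ≤ C' * Real.log N / N :=
  truncated_average_oscillation_general (mΩ := mΩ) μ X hmeas hindep hident f hdens vα hf vhat C
    hvhat
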